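/- arXiv:1804.02080 — 2 statements merged into one kernel-verified Lean document; each statement's English description precedes it below -/
import Mathlib

section
/- Let V_m, V_n, I be complex n-vectors with all entries of V_n nonzero, Z an n×n complex matrix with V_m = V_n + Z I, S = V_n ∘ I*, Γ_{φψ} = V_n^φ/V_n^ψ, M = Re(Γ ∘ Z*), N = Im(Γ ∘ Z*), S = P + iQ. Then for each phase φ, |V_m^φ||V_n^φ| sin(θ_m^φ − θ_n^φ) = −(N P + M Q)_φ, where θ_m^φ, θ_n^φ are arguments of V_m^φ, V_n^φ. -/
/-! The left side is `Im (conj V_n^φ * V_m^φ)`. Substituting `V_m = V_n + Z I` kills the real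
term `|V_n^φ|²`, and since `(Γ ∘ Z*) S = V_n ∘ (Z I)*` (the factors `V_n^ψ` cancel), the
rest is `-Im ((Γ ∘ Z*) S)_φ = -(N P + M Q)_φ`. -/

open Complex Real ComplexConjugate Matrix

namespace Complex

theorem norm_mul_norm_mul_sin_arg_sub (z w : ℂ) :
    ‖z‖ * ‖w‖ * Real.sin (z.arg - w.arg) = (conj w * z).im := by
  rw [Real.sin_sub, mul_im, conj_re, conj_im, ← norm_mul_sin_arg z, ← norm_mul_cos_arg z,
    ← norm_mul_sin_arg w, ← norm_mul_cos_arg w]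
  ring

theorem im_conj_mul_self (z : ℂ) : (conj z * z).im = 0 := by
  rw [mul_im, conj_re, conj_im]
  ring

end Complex

namespace Matrix

variable {m n : Type*} [Fintype n]

theorem im_mulVec (C : Matrix m n ℂ) (s : n → ℂ) (i : m) :
    ((C *ᵥ s) i).im
      = (C.map Complex.im *ᵥ (fun j => (s j).re) + C.map Complex.re *ᵥ (fun j => (s j).im)) i := by
  simp only [mulVec, dotProduct, Pi.add_apply, map_apply, Complex.im_sum, Complex.mul_im,
    ← Finset.sum_add_distrib]
  exact Finset.sum_congr rfl fun j _ => by ring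

theorem mulVec_div_mul_conj (v x : n → ℂ) (hv : ∀ j, v j ≠ 0) (Z : Matrix n n ℂ) (i : n) :
    ((fun i j => v i / v j * conj (Z i j) : Matrix n n ℂ) *ᵥ fun j => v j * conj (x j)) i
      = v i * conj ((Z *ᵥ x) i) := by
  simp only [mulVec, dotProduct, map_sum, map_mul, Finset.mul_sum]
  refine Finset.sum_congr rfl fun j _ => ?_
  field_simp [hv j]

end Matrix

theorem angle_relation (n : ℕ) (Vm Vn I : Fin n → ℂ)
    (Z : Matrix (Fin n) (Fin n) ℂ)
    (hVn : ∀ φ, Vn φ ≠ 0) (h : Vm = Vn + Z.mulVec I) :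
    let S : Fin n → ℂ := fun φ => Vn φ * star (I φ)
    let Γ : Matrix (Fin n) (Fin n) ℂ := fun φ ψ => Vn φ / Vn ψ
    let M : Matrix (Fin n) (Fin n) ℝ :=
      fun φ ψ => (Γ φ ψ * starRingEnd ℂ (Z φ ψ)).re
    let N : Matrix (Fin n) (Fin n) ℝ :=
      fun φ ψ => (Γ φ ψ * starRingEnd ℂ (Z φ ψ)).im
    let P : Fin n → ℝ := fun φ => (S φ).re
    let Q : Fin n → ℝ := fun φ => (S φ).im
    ∀ φ : Fin n,
      ‖Vm φ‖ * ‖Vn φ‖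
          * Real.sin ((Vm φ).arg - (Vn φ).arg)
        = -((N.mulVec P + M.mulVec Q) φ) := by
  intro S Γ M N P Q φ
  have hNPMQ : (N.mulVec P + M.mulVec Q) φ = (Vn φ * conj (Z.mulVec I φ)).im := by
    rw [← Matrix.mulVec_div_mul_conj Vn I hVn]
    exact (Matrix.im_mulVec (fun φ ψ => Γ φ ψ * conj (Z φ ψ)) S φ).symm
  rw [norm_mul_norm_mul_sin_arg_sub, hNPMQ, h, Pi.add_apply, mul_add, add_im, im_conj_mul_self,
    zero_add, ← conj_im, map_mul, conj_conj]
end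

section
/- Under the same hypotheses, Re(V_m* ∘ V_n) = V_n ∘ V_n* + M P − N Q (interpreting V_n ∘ V_n* as a real vector). -/
open Matrix ComplexConjugate

/- Since `V_m = V_n + Z I`, we get `V_m* V_n = |V_n|² + (Z I)* V_n`, and
`(Z I)*_φ V_φ = Σ_ψ (V_φ / V_ψ) Z*_φψ (V_ψ I*_ψ) = ((Γ ∘ Z*) S)_φ`, the factor `V_ψ` cancelling because
`V_n` has no zero entry. The real part of a complex product `A s` is `Re A Re s - Im A Im s`. -/

lemma Complex.re_mulVec_apply {m n : Type*} [Fintype n] (A : Matrix m n ℂ) (s : n → ℂ) (i : m) :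
    ((A *ᵥ s) i).re = (A.map Complex.re *ᵥ fun j => (s j).re) i
      - (A.map Complex.im *ᵥ fun j => (s j).im) i := by
  simp only [mulVec, dotProduct, map_apply, Complex.re_sum, Complex.mul_re, Finset.sum_sub_distrib]

lemma star_mulVec_mul_eq_hadamard_mulVec {n : Type*} [Fintype n] (Z : Matrix n n ℂ)
    (V I : n → ℂ) (hV : ∀ j, V j ≠ 0) (i : n) :
    star ((Z *ᵥ I) i) * V i
      = (((of fun i j => V i / V j) ⊙ Z.map conj) *ᵥ fun j => V j * star (I j)) i := by
  simp only [mulVec, dotProduct, star_sum, Finset.sum_mul, hadamard_apply, of_apply, map_apply]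
  refine Finset.sum_congr rfl fun j _ => ?_
  rw [star_mul', Complex.star_def]
  field_simp [hV j]

theorem angle_re_relation (n : ℕ) (Vm Vn I : Fin n → ℂ)
    (Z : Matrix (Fin n) (Fin n) ℂ)
    (hVn : ∀ φ, Vn φ ≠ 0) (h : Vm = Vn + Z.mulVec I) :
    let S : Fin n → ℂ := fun φ => Vn φ * star (I φ)
    let Γ : Matrix (Fin n) (Fin n) ℂ := fun φ ψ => Vn φ / Vn ψ
    let M : Matrix (Fin n) (Fin n) ℝ :=
      fun φ ψ => (Γ φ ψ * starRingEnd ℂ (Z φ ψ)).re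
    let N : Matrix (Fin n) (Fin n) ℝ :=
      fun φ ψ => (Γ φ ψ * starRingEnd ℂ (Z φ ψ)).im
    let P : Fin n → ℝ := fun φ => (S φ).re
    let Q : Fin n → ℝ := fun φ => (S φ).im
    (fun φ => (star (Vm φ) * Vn φ).re)
      = (fun φ => (Vn φ * star (Vn φ)).re) + M.mulVec P - N.mulVec Q := by
  intro S Γ M N P Q
  subst h
  funext φ
  have hdrop : (star ((Z *ᵥ I) φ) * Vn φ).re = (M *ᵥ P) φ - (N *ᵥ Q) φ := by
    rw [star_mulVec_mul_eq_hadamard_mulVec Z Vn I hVn φ, Complex.re_mulVec_apply]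
    rfl
  simp only [Pi.add_apply, Pi.sub_apply, star_add, add_mul, Complex.add_re, hdrop,
    mul_comm (star (Vn φ))]
  ring
end
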